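/- Let 𝓜₁, 𝓜₂ be bounded subsets of M_n(ℝ) and assume that the switched system (Σ_{𝓜₁}) is uniformly stable. For ν > 0, let 𝓜₂^ν = { M − ν·Id_n : M ∈ 𝓜₂ } and 𝓜 = 𝓜₁ ∪ 𝓜₂^ν. Then there exists ν₀ > 0 such that for every ν ≥ ν₀ the switched system (Σ_𝓜) is uniformly stable. -/

import Mathlib

/-!
The supremum `V X` of `‖X‖` and of all `‖Φ t * X‖`, over the trajectories `Φ` of `(Σ_𝓜₁)`, is a
convex function comparable to `‖X‖` that does not increase along trajectories of `(Σ_𝓜₁)`, since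
trajectories can be concatenated. During a short time `h`, a trajectory of the enlarged system
moves `Y = Φ a` to `Y + (∫ A) * Y + O(h²)`, and `Y + (∫ A) * Y` is an average of the points
`Y + h • (A s * Y)`. When `A s ∈ 𝓜₁` such a point is `O(h²)`-close to `exp (h • A s) * Y`, whose
`V`-value is at most `V Y`; when `A s = M - ν • 1` it equals `(1 - h ν) • Y + h • (M * Y)`, whose
`V`-value is at most `V Y` as soon as `ν` dominates the `V`-size of `M * Y`. By convexity `V ∘ Φ`
grows by `O(h²)` per step of length `h`, hence not at all, and `‖Φ t‖ ≤ V (Φ t) ≤ V 1`.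
-/

open MeasureTheory Set
open scoped RealInnerProductSpace

noncomputable section

attribute [local instance] Matrix.normedAddCommGroup Matrix.normedSpace

local instance matrixMeasurableSpace {n : ℕ} :
    MeasurableSpace (Matrix (Fin n) (Fin n) ℝ) :=
  inferInstanceAs (MeasurableSpace (Fin n → Fin n → ℝ))

/-- The space of `n × n` real matrices. -/
abbrev Mat (n : ℕ) := Matrix (Fin n) (Fin n) ℝ

/-- The state space `ℝⁿ` with its Euclidean structure. -/
abbrev Vec (n : ℕ) := EuclideanSpace ℝ (Fin n)

/-- Action of a matrix on a vector of Euclidean space. -/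
def Mat.act {n : ℕ} (M : Mat n) (x : Vec n) : Vec n := Matrix.toEuclideanLin M x

/-- A switching law for the switched system `(Σ_𝓜)`: a measurable function taking values in `𝓜`. -/
def IsSwitchingLaw {n : ℕ} (𝓜 : Set (Mat n)) (A : ℝ → Mat n) : Prop :=
  Measurable A ∧ ∀ t, 0 ≤ t → A t ∈ 𝓜

/-- `Φ` is the fundamental matrix `t ↦ Φ_A(t,0)` of the switching law `A`: the continuous
solution on `[0,∞)` of `Φ(t) = Id + ∫₀ᵗ A(s) Φ(s) ds`. -/
def IsFundamentalMatrix {n : ℕ} (A : ℝ → Mat n) (Φ : ℝ → Mat n) : Prop :=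
  ContinuousOn Φ (Ici (0:ℝ)) ∧
  ∀ t, 0 ≤ t → Φ t = 1 + ∫ s in (0:ℝ)..t, A s * Φ s

/-- Uniform stability of the switched system `(Σ_𝓜)`. -/
def UniformlyStable {n : ℕ} (𝓜 : Set (Mat n)) : Prop :=
  ∃ C > 0, ∀ A Φ : ℝ → Mat n, IsSwitchingLaw 𝓜 A → IsFundamentalMatrix A Φ →
    ∀ t, 0 ≤ t → ‖Φ t‖ ≤ C

/-- Uniform exponential stability of the switched system `(Σ_𝓜)`. -/
def UniformlyExpStable {n : ℕ} (𝓜 : Set (Mat n)) : Prop :=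
  ∃ C > 0, ∃ γ > 0, ∀ A Φ : ℝ → Mat n, IsSwitchingLaw 𝓜 A → IsFundamentalMatrix A Φ →
    ∀ t, 0 ≤ t → ‖Φ t‖ ≤ C * Real.exp (-γ * t)

/-- A nonstrict common Lyapunov function for `(Σ_𝓜)`: continuous, nonnegative, positive
definite, and non-increasing along every trajectory. -/
def IsNonstrictCLF {n : ℕ} (𝓜 : Set (Mat n)) (V : Vec n → ℝ) : Prop :=
  Continuous V ∧ (∀ x, 0 ≤ V x) ∧ V 0 = 0 ∧ (∀ x, x ≠ 0 → 0 < V x) ∧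
  ∀ A Φ : ℝ → Mat n, IsSwitchingLaw 𝓜 A → IsFundamentalMatrix A Φ → ∀ x₀ : Vec n,
    AntitoneOn (fun t => V ((Φ t).act x₀)) (Ici 0)

/-- A (strict) common Lyapunov function for `(Σ_𝓜)`: a nonstrict one that is moreover
strictly decreasing along every nonzero trajectory. -/
def IsCLF {n : ℕ} (𝓜 : Set (Mat n)) (V : Vec n → ℝ) : Prop :=
  IsNonstrictCLF 𝓜 V ∧
  ∀ A Φ : ℝ → Mat n, IsSwitchingLaw 𝓜 A → IsFundamentalMatrix A Φ → ∀ x₀ : Vec n, x₀ ≠ 0 →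
    StrictAntiOn (fun t => V ((Φ t).act x₀)) (Ici 0)

/-- A universal class of Lyapunov functions. -/
def IsUniversalClass {n : ℕ} (P : Set (Vec n → ℝ)) : Prop :=
  ∀ 𝓜 : Set (Mat n), Bornology.IsBounded 𝓜 → UniformlyExpStable 𝓜 →
    ∃ V ∈ P, IsCLF 𝓜 V

/-- `V` is absolutely homogeneous of degree `α`. -/
def AbsHomog {n : ℕ} (α : ℝ) (V : Vec n → ℝ) : Prop :=
  ∀ (lam : ℝ) (x : Vec n), V (lam • x) = |lam| ^ α * V x

/-- The subdifferential of a convex function. -/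
def subdiff {n : ℕ} (V : Vec n → ℝ) (x : Vec n) : Set (Vec n) :=
  {l | ∀ y, ⟪l, y - x⟫ ≤ V y - V x}

lemma Convex.add_intervalIntegral_mem {E : Type*} [NormedAddCommGroup E] [NormedSpace ℝ E]
    [CompleteSpace E] {S : Set E} (hS : Convex ℝ S) (hSc : IsClosed S) {a b : ℝ} (hab : a < b)
    {g : ℝ → E} (hg : IntervalIntegrable g volume a b) {y : E}
    (hmem : ∀ s ∈ Ioc a b, y + (b - a) • g s ∈ S) : y + ∫ s in a..b, g s ∈ S := by
  have hμ : volume.real (Ioc a b) = b - a := by simp [hab.le]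
  have : NeZero (volume.restrict (Ioc a b)) := ⟨by simp [hab]⟩
  have hg' : Integrable (fun s => (b - a) • g s) (volume.restrict (Ioc a b)) :=
    ((intervalIntegrable_iff_integrableOn_Ioc_of_le hab.le).1 hg).smul (b - a)
  have hmean := hS.average_mem hSc ((ae_restrict_iff' measurableSet_Ioc).2 (.of_forall hmem))
    ((integrable_const y).add hg')
  rwa [average_eq, integral_add (integrable_const y) hg', integral_const,
    integral_smul, measureReal_restrict_apply_univ, hμ, smul_add, smul_smul, smul_smul,
    inv_mul_cancel₀ (sub_ne_zero.2 hab.ne'), one_smul, one_smul,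
    ← intervalIntegral.integral_of_le hab.le] at hmean

lemma le_of_forall_le_add_mul_sq {g : ℝ → ℝ} {t δ D : ℝ} (ht : 0 ≤ t) (hδ : 0 < δ)
    (hg : ∀ s h, 0 ≤ s → 0 < h → h ≤ δ → s + h ≤ t → g (s + h) ≤ g s + D * h ^ 2) :
    g t ≤ g 0 := by
  rcases ht.eq_or_lt with rfl | ht
  · rfl
  -- `N` steps of length `t / N` accumulate an error `N * D * (t / N) ^ 2 = D * t ^ 2 / N`.
  have hN : ∀ N : ℕ, t / δ ≤ N → g t ≤ g 0 + D * t ^ 2 / N := by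
    intro N hNδ
    have hN0 : (0 : ℝ) < N := (div_pos ht hδ).trans_le hNδ
    have hstep : t / N ≤ δ := by
      rw [div_le_iff₀ hN0, mul_comm]; rwa [div_le_iff₀ hδ] at hNδ
    have hk : ∀ k ≤ N, g (k * (t / N)) ≤ g 0 + k * (D * (t / N) ^ 2) := by
      intro k hk
      induction k with
      | zero => simp
      | succ k ih =>
        have hkN : (k + 1 : ℝ) * (t / N) ≤ N * (t / N) := by gcongr; exact_mod_cast hk
        rw [mul_div_cancel₀ t hN0.ne'] at hkN
        have := hg (k * (t / N)) (t / N) (by positivity) (by positivity) hstep (by linarith)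
        push_cast
        rw [add_one_mul]
        linarith [ih (by omega)]
    convert hk N le_rfl using 2
    · rw [mul_div_cancel₀ t hN0.ne']
    · field_simp
  refine ge_of_tendsto ?_
    (Filter.eventually_atTop.2 ⟨⌈t / δ⌉₊, fun N hNδ => hN N (Nat.ceil_le.1 hNδ)⟩)
  simpa using tendsto_const_nhds.add (tendsto_const_div_atTop_nhds_zero_nat (D * t ^ 2))

section Trajectories

variable {n : ℕ}

-- Instance search does not reach these through the local sup-norm instance on `Mat n`.
local instance : BorelSpace (Mat n) := inferInstanceAs (BorelSpace (Fin n → Fin n → ℝ))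
local instance : ENormedAddCommMonoid (Mat n) :=
  @NormedAddCommGroup.toENormedAddCommMonoid (Mat n) _
local instance : SecondCountableTopology (Mat n) :=
  inferInstanceAs (SecondCountableTopology (Fin n → Fin n → ℝ))

lemma Mat.norm_mul_le (A B : Mat n) : ‖A * B‖ ≤ n * ‖A‖ * ‖B‖ := by
  refine (Matrix.norm_le_iff (by positivity)).2 fun i j => ?_
  calc ‖(A * B) i j‖ ≤ ∑ k, ‖A i k‖ * ‖B k j‖ := by
        rw [Matrix.mul_apply]
        exact (norm_sum_le _ _).trans (Finset.sum_le_sum fun k _ => _root_.norm_mul_le _ _)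
    _ ≤ ∑ _k : Fin n, ‖A‖ * ‖B‖ := by
        gcongr <;> exact Matrix.norm_entry_le_entrywise_sup_norm _
    _ = n * ‖A‖ * ‖B‖ := by simp [mul_assoc]

lemma Mat.intervalIntegral_mul_const {f : ℝ → Mat n} {a b : ℝ}
    (hf : IntervalIntegrable f volume a b) (X : Mat n) :
    ∫ s in a..b, f s * X = (∫ s in a..b, f s) * X :=
  (LinearMap.mulRight ℝ X).toContinuousLinearMap.intervalIntegral_comp_comm hf

variable {𝓜 : Set (Mat n)} {K : ℝ} {A Φ : ℝ → Mat n}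

lemma IsFundamentalMatrix.apply_zero (hΦ : IsFundamentalMatrix A Φ) : Φ 0 = 1 := by
  simpa using hΦ.2 0 le_rfl

lemma IsSwitchingLaw.norm_mul_le (hA : IsSwitchingLaw 𝓜 A) (hK : ∀ M ∈ 𝓜, ‖M‖ ≤ K)
    {s : ℝ} (hs : 0 ≤ s) (X : Mat n) : ‖A s * X‖ ≤ n * K * ‖X‖ :=
  (Mat.norm_mul_le _ _).trans (by gcongr; exact hK _ (hA.2 s hs))

lemma IsSwitchingLaw.intervalIntegrable (hA : IsSwitchingLaw 𝓜 A) (hK : ∀ M ∈ 𝓜, ‖M‖ ≤ K)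
    {a b : ℝ} (ha : 0 ≤ a) (hab : a ≤ b) : IntervalIntegrable A volume a b := by
  rw [intervalIntegrable_iff_integrableOn_Ioc_of_le hab]
  refine ⟨hA.1.aestronglyMeasurable, .restrict_of_bounded (C := K) measure_Ioc_lt_top
    ((ae_restrict_iff' measurableSet_Ioc).2 (.of_forall fun s hs => ?_))⟩
  exact hK _ (hA.2 s (ha.trans hs.1.le))

lemma IsSwitchingLaw.intervalIntegrable_mul (hA : IsSwitchingLaw 𝓜 A) (hK : ∀ M ∈ 𝓜, ‖M‖ ≤ K)
    (hΦ : ContinuousOn Φ (Ici 0)) {a b : ℝ} (ha : 0 ≤ a) (hab : a ≤ b) :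
    IntervalIntegrable (fun s => A s * Φ s) volume a b := by
  have hΦab : ContinuousOn Φ (Icc a b) := hΦ.mono fun s hs => ha.trans hs.1
  obtain ⟨B, hB⟩ := isCompact_Icc.exists_bound_of_continuousOn hΦab
  have hK0 : 0 ≤ K := (norm_nonneg _).trans (hK _ (hA.2 a ha))
  rw [intervalIntegrable_iff_integrableOn_Ioc_of_le hab]
  refine ⟨?_, .restrict_of_bounded (C := n * K * B) measure_Ioc_lt_top ?_⟩
  · exact (continuous_fst.matrix_mul continuous_snd).comp_aestronglyMeasurable
      (hA.1.aestronglyMeasurable.prodMk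
        ((hΦab.mono Ioc_subset_Icc_self).aestronglyMeasurable measurableSet_Ioc))
  · refine (ae_restrict_iff' measurableSet_Ioc).2 (.of_forall fun s hs => ?_)
    exact (hA.norm_mul_le hK (ha.trans hs.1.le) _).trans
      (by gcongr; exact hB s (Ioc_subset_Icc_self hs))

lemma IsFundamentalMatrix.sub_eq_integral (hΦ : IsFundamentalMatrix A Φ)
    (hA : IsSwitchingLaw 𝓜 A) (hK : ∀ M ∈ 𝓜, ‖M‖ ≤ K) {a b : ℝ} (ha : 0 ≤ a) (hab : a ≤ b) :
    Φ b - Φ a = ∫ s in a..b, A s * Φ s := by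
  rw [hΦ.2 b (ha.trans hab), hΦ.2 a ha, ← intervalIntegral.integral_add_adjacent_intervals
    (hA.intervalIntegrable_mul hK hΦ.1 le_rfl ha) (hA.intervalIntegrable_mul hK hΦ.1 ha hab)]
  abel

lemma IsFundamentalMatrix.norm_sub_sub_integral_mul_le (hΦ : IsFundamentalMatrix A Φ)
    (hA : IsSwitchingLaw 𝓜 A) (hK : ∀ M ∈ 𝓜, ‖M‖ ≤ K) {a h B : ℝ} (ha : 0 ≤ a) (hh : 0 ≤ h)
    (hB : ∀ s ∈ Icc a (a + h), ‖Φ s‖ ≤ B) :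
    ‖Φ (a + h) - Φ a - (∫ s in a..a + h, A s) * Φ a‖ ≤ (n * K * h) ^ 2 * B := by
  have hK0 : 0 ≤ K := (norm_nonneg _).trans (hK _ (hA.2 a ha))
  have hah : a ≤ a + h := le_add_of_nonneg_right hh
  have hB0 : 0 ≤ B := (norm_nonneg _).trans (hB a ⟨le_rfl, hah⟩)
  have hdrift : ∀ s ∈ Icc a (a + h), ‖Φ s - Φ a‖ ≤ n * K * B * h := by
    intro s hs
    rw [hΦ.sub_eq_integral hA hK ha hs.1]
    refine (intervalIntegral.norm_integral_le_of_norm_le_const (C := n * K * B)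
      fun u hu => ?_).trans ?_
    · rw [uIoc_of_le hs.1] at hu
      exact (hA.norm_mul_le hK (ha.trans hu.1.le) _).trans
        (by gcongr; exact hB u ⟨hu.1.le, hu.2.trans hs.2⟩)
    · rw [abs_of_nonneg (sub_nonneg.2 hs.1)]
      gcongr
      linarith [hs.2]
  rw [hΦ.sub_eq_integral hA hK ha hah,
    ← Mat.intervalIntegral_mul_const (hA.intervalIntegrable hK ha hah),
    ← intervalIntegral.integral_sub (hA.intervalIntegrable_mul hK hΦ.1 ha hah)
      (hA.intervalIntegrable_mul hK continuousOn_const ha hah)]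
  refine (intervalIntegral.norm_integral_le_of_norm_le_const (C := n * K * (n * K * B * h))
    fun u hu => ?_).trans_eq ?_
  · rw [uIoc_of_le hah] at hu
    rw [← mul_sub]
    exact (hA.norm_mul_le hK (ha.trans hu.1.le) _).trans
      (by gcongr; exact hdrift u ⟨hu.1.le, hu.2⟩)
  · rw [add_sub_cancel_left, abs_of_nonneg hh]
    ring

lemma Mat.hasDerivAt_exp_smul (M : Mat n) (t : ℝ) :
    HasDerivAt (fun s : ℝ => NormedSpace.exp (s • M)) (M * NormedSpace.exp (t • M)) t := by
  -- `NormedSpace.exp` only depends on the topology: differentiate it for the submultiplicative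
  -- ℓ∞-operator norm and transport the derivative through the norm-free slope characterization.
  let R := Matrix.linftyOpNormedRing (n := Fin n) (α := ℝ)
  let S := Matrix.linftyOpNormedAlgebra (n := Fin n) (R := ℝ) (α := ℝ)
  have hR : @CompleteSpace (Mat n) PseudoMetricSpace.toUniformSpace :=
    FiniteDimensional.complete ℝ (Mat n)
  exact hasDerivAt_iff_tendsto_slope.2 (hasDerivAt_iff_tendsto_slope.1
    (@hasDerivAt_exp_smul_const' ℝ (Mat n) _ R S hR M t))

lemma isFundamentalMatrix_exp (M : Mat n) :
    IsFundamentalMatrix (fun _ => M) (fun t => NormedSpace.exp (t • M)) := by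
  have hcont : Continuous fun t : ℝ => NormedSpace.exp (t • M) :=
    continuous_iff_continuousAt.2 fun t => (Mat.hasDerivAt_exp_smul M t).continuousAt
  refine ⟨hcont.continuousOn, fun t _ => ?_⟩
  rw [intervalIntegral.integral_eq_sub_of_hasDerivAt (fun s _ => Mat.hasDerivAt_exp_smul M s)
    ((continuous_const.matrix_mul hcont).intervalIntegrable _ _)]
  simp

lemma IsSwitchingLaw.splice {B : ℝ → Mat n} (hB : IsSwitchingLaw 𝓜 B) (hA : IsSwitchingLaw 𝓜 A)
    (h : ℝ) : IsSwitchingLaw 𝓜 fun s => if s ≤ h then B s else A (s - h) := by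
  refine ⟨Measurable.ite measurableSet_Iic hB.1 (hA.1.comp (measurable_id.sub_const h)),
    fun s hs => ?_⟩
  dsimp only
  split_ifs with hsh
  · exact hB.2 s hs
  · exact hA.2 _ (by linarith [not_le.1 hsh])

lemma IsFundamentalMatrix.splice {B Θ : ℝ → Mat n} (hK : ∀ M ∈ 𝓜, ‖M‖ ≤ K)
    (hB : IsSwitchingLaw 𝓜 B) (hΘ : IsFundamentalMatrix B Θ)
    (hA : IsSwitchingLaw 𝓜 A) (hΦ : IsFundamentalMatrix A Φ) {h : ℝ} (hh : 0 ≤ h) :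
    IsFundamentalMatrix (fun s => if s ≤ h then B s else A (s - h))
      (fun s => if s ≤ h then Θ s else Φ (s - h) * Θ h) := by
  set A' : ℝ → Mat n := fun s => if s ≤ h then B s else A (s - h)
  set Φ' : ℝ → Mat n := fun s => if s ≤ h then Θ s else Φ (s - h) * Θ h
  have hcont : ContinuousOn Φ' (Ici 0) := by
    refine ContinuousOn.if (fun s hs => ?_) (hΘ.1.mono inter_subset_left) ?_
    · rw [show frontier {s : ℝ | s ≤ h} = {h} from frontier_Iic] at hs
      rw [hs.2, sub_self, hΦ.apply_zero, one_mul]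
    · rw [show {s : ℝ | ¬s ≤ h} = Ioi h by ext; simp, closure_Ioi]
      refine (hΦ.1.comp (continuous_sub_right h).continuousOn fun s hs => ?_).mul
        continuousOn_const
      simpa using hs.2
  have hA' := hB.splice hA h
  refine ⟨hcont, fun t ht => ?_⟩
  have hbefore : ∀ t ∈ Icc 0 h, ∫ s in (0:ℝ)..t, A' s * Φ' s = ∫ s in (0:ℝ)..t, B s * Θ s := by
    refine fun t ht => intervalIntegral.integral_congr fun s hs => ?_
    rw [uIcc_of_le ht.1] at hs
    simp only [A', Φ', if_pos (hs.2.trans ht.2)]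
  by_cases hth : t ≤ h
  · simp only [Φ', if_pos hth]
    rw [hbefore t ⟨ht, hth⟩, ← hΘ.2 t ht]
  have hafter : ∫ s in h..t, A' s * Φ' s = (Φ (t - h) - 1) * Θ h := by
    have hth' : 0 ≤ t - h := by linarith
    calc ∫ s in h..t, A' s * Φ' s = ∫ s in h..t, A (s - h) * Φ (s - h) * Θ h := by
          refine intervalIntegral.integral_congr_ae (.of_forall fun s hs => ?_)
          rw [uIoc_of_le (by linarith)] at hs
          simp only [A', Φ', if_neg (not_le.2 hs.1), mul_assoc]
      _ = ∫ u in (0:ℝ)..t - h, A u * Φ u * Θ h := by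
          simpa using intervalIntegral.integral_comp_sub_right (fun u => A u * Φ u * Θ h) h
            (a := h) (b := t)
      _ = (∫ u in (0:ℝ)..t - h, A u * Φ u) * Θ h :=
          Mat.intervalIntegral_mul_const (hA.intervalIntegrable_mul hK hΦ.1 le_rfl hth') _
      _ = (Φ (t - h) - 1) * Θ h := by rw [hΦ.2 (t - h) hth', add_sub_cancel_left]
  have hΘh : ∫ s in (0:ℝ)..h, B s * Θ s = Θ h - 1 := by rw [hΘ.2 h hh, add_sub_cancel_left]
  simp only [Φ', if_neg hth]
  rw [← intervalIntegral.integral_add_adjacent_intervals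
      (hA'.intervalIntegrable_mul hK hcont le_rfl hh)
      (hA'.intervalIntegrable_mul hK hcont hh (not_le.1 hth).le),
    hbefore h ⟨hh, le_rfl⟩, hafter, hΘh]
  noncomm_ring

end Trajectories

section Lyapunov

variable {n : ℕ} {𝓜 : Set (Mat n)} {C K : ℝ} {A Φ : ℝ → Mat n}

def UniformlyStableWith (𝓜 : Set (Mat n)) (C : ℝ) : Prop :=
  ∀ A Φ : ℝ → Mat n, IsSwitchingLaw 𝓜 A → IsFundamentalMatrix A Φ → ∀ t, 0 ≤ t → ‖Φ t‖ ≤ C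

def lyapunovNorm (𝓜 : Set (Mat n)) (X : Mat n) : ℝ :=
  sSup (insert ‖X‖ {r | ∃ A Φ t, IsSwitchingLaw 𝓜 A ∧ IsFundamentalMatrix A Φ ∧ 0 ≤ t ∧
    r = ‖Φ t * X‖})

lemma lyapunovNorm_le_of_forall {X : Mat n} {r : ℝ} (hX : ‖X‖ ≤ r)
    (hr : ∀ A Φ, IsSwitchingLaw 𝓜 A → IsFundamentalMatrix A Φ → ∀ t, 0 ≤ t → ‖Φ t * X‖ ≤ r) :
    lyapunovNorm 𝓜 X ≤ r :=
  csSup_le (insert_nonempty _ _) <| by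
    rintro _ (rfl | ⟨A, Φ, t, hA, hΦ, ht, rfl⟩)
    exacts [hX, hr A Φ hA hΦ t ht]

lemma UniformlyStableWith.norm_mul_le (hC : UniformlyStableWith 𝓜 C) (hA : IsSwitchingLaw 𝓜 A)
    (hΦ : IsFundamentalMatrix A Φ) {t : ℝ} (ht : 0 ≤ t) (X : Mat n) :
    ‖Φ t * X‖ ≤ n * C * ‖X‖ :=
  (Mat.norm_mul_le _ _).trans (by gcongr; exact hC A Φ hA hΦ t ht)

lemma lyapunovNorm_bddAbove (hC : UniformlyStableWith 𝓜 C) (hC0 : 0 ≤ C) (X : Mat n) :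
    BddAbove (insert ‖X‖ {r | ∃ A Φ t, IsSwitchingLaw 𝓜 A ∧ IsFundamentalMatrix A Φ ∧ 0 ≤ t ∧
      r = ‖Φ t * X‖}) := by
  refine ⟨(n * C + 1) * ‖X‖, ?_⟩
  rintro _ (rfl | ⟨A, Φ, t, hA, hΦ, ht, rfl⟩)
  · exact le_mul_of_one_le_left (norm_nonneg _) (by nlinarith)
  · exact (hC.norm_mul_le hA hΦ ht X).trans (by gcongr; linarith)

lemma lyapunovNorm_le (hC : UniformlyStableWith 𝓜 C) (hC0 : 0 ≤ C) (X : Mat n) :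
    lyapunovNorm 𝓜 X ≤ (n * C + 1) * ‖X‖ :=
  lyapunovNorm_le_of_forall (le_mul_of_one_le_left (norm_nonneg _) (by nlinarith))
    fun _ _ hA hΦ _ ht => (hC.norm_mul_le hA hΦ ht X).trans (by gcongr; linarith)

lemma norm_le_lyapunovNorm (hC : UniformlyStableWith 𝓜 C) (hC0 : 0 ≤ C) (X : Mat n) :
    ‖X‖ ≤ lyapunovNorm 𝓜 X :=
  le_csSup (lyapunovNorm_bddAbove hC hC0 X) (mem_insert _ _)

lemma norm_mul_le_lyapunovNorm (hC : UniformlyStableWith 𝓜 C) (hC0 : 0 ≤ C)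
    (hA : IsSwitchingLaw 𝓜 A) (hΦ : IsFundamentalMatrix A Φ) {t : ℝ} (ht : 0 ≤ t) (X : Mat n) :
    ‖Φ t * X‖ ≤ lyapunovNorm 𝓜 X :=
  le_csSup (lyapunovNorm_bddAbove hC hC0 X) (Or.inr ⟨A, Φ, t, hA, hΦ, ht, rfl⟩)

lemma lyapunovNorm_add_le (hC : UniformlyStableWith 𝓜 C) (hC0 : 0 ≤ C) (X Y : Mat n) :
    lyapunovNorm 𝓜 (X + Y) ≤ lyapunovNorm 𝓜 X + lyapunovNorm 𝓜 Y := by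
  refine lyapunovNorm_le_of_forall ((norm_add_le X Y).trans
    (add_le_add (norm_le_lyapunovNorm hC hC0 X) (norm_le_lyapunovNorm hC hC0 Y)))
    fun A Φ hA hΦ t ht => ?_
  rw [mul_add]
  exact (norm_add_le _ _).trans (add_le_add (norm_mul_le_lyapunovNorm hC hC0 hA hΦ ht X)
    (norm_mul_le_lyapunovNorm hC hC0 hA hΦ ht Y))

lemma lyapunovNorm_smul_le (hC : UniformlyStableWith 𝓜 C) (hC0 : 0 ≤ C) (c : ℝ) (X : Mat n) :
    lyapunovNorm 𝓜 (c • X) ≤ |c| * lyapunovNorm 𝓜 X := by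
  refine lyapunovNorm_le_of_forall ?_ fun A Φ hA hΦ t ht => ?_
  · rw [norm_smul, Real.norm_eq_abs]
    exact mul_le_mul_of_nonneg_left (norm_le_lyapunovNorm hC hC0 X) (abs_nonneg c)
  · rw [Matrix.mul_smul, norm_smul, Real.norm_eq_abs]
    exact mul_le_mul_of_nonneg_left (norm_mul_le_lyapunovNorm hC hC0 hA hΦ ht X) (abs_nonneg c)

lemma lyapunovNorm_le_add (hC : UniformlyStableWith 𝓜 C) (hC0 : 0 ≤ C) (X Y : Mat n) :
    lyapunovNorm 𝓜 X ≤ lyapunovNorm 𝓜 Y + (n * C + 1) * ‖X - Y‖ :=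
  calc lyapunovNorm 𝓜 X = lyapunovNorm 𝓜 (Y + (X - Y)) := by rw [add_sub_cancel]
    _ ≤ lyapunovNorm 𝓜 Y + lyapunovNorm 𝓜 (X - Y) := lyapunovNorm_add_le hC hC0 _ _
    _ ≤ lyapunovNorm 𝓜 Y + (n * C + 1) * ‖X - Y‖ := by gcongr; exact lyapunovNorm_le hC hC0 _

lemma continuous_lyapunovNorm (hC : UniformlyStableWith 𝓜 C) (hC0 : 0 ≤ C) :
    Continuous (lyapunovNorm 𝓜) :=
  (LipschitzWith.of_le_add_mul' _ fun X Y => by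
    simpa [dist_eq_norm] using lyapunovNorm_le_add hC hC0 X Y).continuous

lemma convexOn_lyapunovNorm (hC : UniformlyStableWith 𝓜 C) (hC0 : 0 ≤ C) :
    ConvexOn ℝ univ (lyapunovNorm 𝓜) := by
  refine ⟨convex_univ, fun X _ Y _ a b ha hb _ => ?_⟩
  calc lyapunovNorm 𝓜 (a • X + b • Y) ≤ lyapunovNorm 𝓜 (a • X) + lyapunovNorm 𝓜 (b • Y) :=
        lyapunovNorm_add_le hC hC0 _ _
    _ ≤ |a| * lyapunovNorm 𝓜 X + |b| * lyapunovNorm 𝓜 Y :=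
        add_le_add (lyapunovNorm_smul_le hC hC0 _ _) (lyapunovNorm_smul_le hC hC0 _ _)
    _ = a • lyapunovNorm 𝓜 X + b • lyapunovNorm 𝓜 Y := by
        rw [abs_of_nonneg ha, abs_of_nonneg hb, smul_eq_mul, smul_eq_mul]

lemma IsFundamentalMatrix.lyapunovNorm_mul_le (hC : UniformlyStableWith 𝓜 C) (hC0 : 0 ≤ C)
    (hK : ∀ M ∈ 𝓜, ‖M‖ ≤ K) (hA : IsSwitchingLaw 𝓜 A) (hΦ : IsFundamentalMatrix A Φ) {h : ℝ}
    (hh : 0 ≤ h) (X : Mat n) :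
    lyapunovNorm 𝓜 (Φ h * X) ≤ lyapunovNorm 𝓜 X := by
  refine lyapunovNorm_le_of_forall (norm_mul_le_lyapunovNorm hC hC0 hA hΦ hh X)
    fun B Ψ hB hΨ τ hτ => ?_
  have hspliced : (if τ + h ≤ h then Φ (τ + h) else Ψ (τ + h - h) * Φ h) = Ψ τ * Φ h := by
    split_ifs with hτh
    · obtain rfl : τ = 0 := by linarith
      rw [hΨ.apply_zero, one_mul, zero_add]
    · rw [add_sub_cancel_right]
  rw [← mul_assoc, ← hspliced]
  exact norm_mul_le_lyapunovNorm hC hC0 (hA.splice hB h) (hΦ.splice hK hA hB hΨ hh)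
    (by positivity) X

lemma lyapunovNorm_add_smul_mul_le_of_mem (hC : UniformlyStableWith 𝓜 C) (hC0 : 0 ≤ C)
    (hK : ∀ M ∈ 𝓜, ‖M‖ ≤ K) {N : Mat n} (hN : N ∈ 𝓜) {h : ℝ} (hh : 0 ≤ h) (Y : Mat n) :
    lyapunovNorm 𝓜 (Y + h • (N * Y)) ≤
      lyapunovNorm 𝓜 Y + (n * C + 1) * n * (n * K) ^ 2 * C * h ^ 2 * ‖Y‖ := by
  set E := NormedSpace.exp (h • N)
  have hlaw : IsSwitchingLaw 𝓜 fun _ => N := ⟨measurable_const, fun _ _ => hN⟩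
  -- the constant law `N` stays in `𝓜`, so its trajectory `s ↦ exp (s • N)` is bounded by `C`
  have hE : ‖E - 1 - h • N‖ ≤ (n * K * h) ^ 2 * C := by
    simpa using (isFundamentalMatrix_exp N).norm_sub_sub_integral_mul_le hlaw hK le_rfl hh
      fun s hs => hC _ _ hlaw (isFundamentalMatrix_exp N) s hs.1
  have hdiff : Y + h • (N * Y) - E * Y = -((E - 1 - h • N) * Y) := by noncomm_ring
  calc lyapunovNorm 𝓜 (Y + h • (N * Y))
      ≤ lyapunovNorm 𝓜 (E * Y) + (n * C + 1) * ‖Y + h • (N * Y) - E * Y‖ :=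
        lyapunovNorm_le_add hC hC0 _ _
    _ ≤ lyapunovNorm 𝓜 Y + (n * C + 1) * (n * ‖E - 1 - h • N‖ * ‖Y‖) := by
        rw [hdiff, norm_neg]
        gcongr
        · exact (isFundamentalMatrix_exp N).lyapunovNorm_mul_le hC hC0 hK hlaw hh Y
        · exact Mat.norm_mul_le _ _
    _ ≤ lyapunovNorm 𝓜 Y + (n * C + 1) * (n * ((n * K * h) ^ 2 * C) * ‖Y‖) := by gcongr
    _ = lyapunovNorm 𝓜 Y + (n * C + 1) * n * (n * K) ^ 2 * C * h ^ 2 * ‖Y‖ := by ring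

lemma lyapunovNorm_add_smul_shift_mul_le (hC : UniformlyStableWith 𝓜 C) (hC0 : 0 ≤ C)
    {M : Mat n} (hM : ‖M‖ ≤ K) {ν h : ℝ} (hν : (n * C + 1) * n * K ≤ ν) (hh : 0 ≤ h)
    (hhν : h * ν ≤ 1) (Y : Mat n) :
    lyapunovNorm 𝓜 (Y + h • ((M - ν • 1) * Y)) ≤ lyapunovNorm 𝓜 Y := by
  have hK0 : 0 ≤ K := (norm_nonneg _).trans hM
  have hshift : Y + h • ((M - ν • 1) * Y) = (1 - h * ν) • Y + h • (M * Y) := by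
    rw [sub_mul, smul_mul_assoc, one_mul]
    module
  have hMY : (n * C + 1) * ‖M * Y‖ ≤ ν * lyapunovNorm 𝓜 Y :=
    calc (n * C + 1) * ‖M * Y‖ ≤ (n * C + 1) * (n * K * ‖Y‖) := by
          gcongr
          exact (Mat.norm_mul_le _ _).trans (by gcongr)
      _ ≤ ν * ‖Y‖ := by rw [← mul_assoc, ← mul_assoc]; gcongr
      _ ≤ ν * lyapunovNorm 𝓜 Y := by
          gcongr
          · exact (by positivity : (0:ℝ) ≤ (n * C + 1) * n * K).trans hν
          · exact norm_le_lyapunovNorm hC hC0 Y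
  calc lyapunovNorm 𝓜 (Y + h • ((M - ν • 1) * Y))
      ≤ lyapunovNorm 𝓜 ((1 - h * ν) • Y) + lyapunovNorm 𝓜 (h • (M * Y)) := by
        rw [hshift]; exact lyapunovNorm_add_le hC hC0 _ _
    _ ≤ (1 - h * ν) * lyapunovNorm 𝓜 Y + h * ((n * C + 1) * ‖M * Y‖) := by
        gcongr
        · simpa [abs_of_nonneg (sub_nonneg.2 hhν)] using lyapunovNorm_smul_le hC hC0 (1 - h * ν) Y
        · simpa [abs_of_nonneg hh] using (lyapunovNorm_smul_le hC hC0 h (M * Y)).trans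
            (mul_le_mul_of_nonneg_left (lyapunovNorm_le hC hC0 _) (abs_nonneg h))
    _ ≤ lyapunovNorm 𝓜 Y := by nlinarith

lemma IsFundamentalMatrix.lyapunovNorm_step_le (hC : UniformlyStableWith 𝓜 C) (hC0 : 0 ≤ C)
    {𝓝 : Set (Mat n)} (hK : ∀ N ∈ 𝓝, ‖N‖ ≤ K) (hA : IsSwitchingLaw 𝓝 A)
    (hΦ : IsFundamentalMatrix A Φ) {a h B r : ℝ} (ha : 0 ≤ a) (hh : 0 < h)
    (hB : ∀ s ∈ Icc a (a + h), ‖Φ s‖ ≤ B)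
    (hr : ∀ N ∈ 𝓝, lyapunovNorm 𝓜 (Φ a + h • (N * Φ a)) ≤ r) :
    lyapunovNorm 𝓜 (Φ (a + h)) ≤ r + (n * C + 1) * ((n * K * h) ^ 2 * B) := by
  have hah : a ≤ a + h := by linarith
  -- `Φ a + (∫ A) * Φ a` is an average of the points `Φ a + h • (A s * Φ a)`, each in the
  -- closed convex sublevel set `{V ≤ r}`.
  have hmean : lyapunovNorm 𝓜 (Φ a + (∫ s in a..a + h, A s) * Φ a) ≤ r := by
    rw [← Mat.intervalIntegral_mul_const (hA.intervalIntegrable hK ha hah)]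
    refine (Convex.add_intervalIntegral_mem
      (by simpa using (convexOn_lyapunovNorm hC hC0).convex_le r)
      (isClosed_le (continuous_lyapunovNorm hC hC0) continuous_const) (by linarith)
      (hA.intervalIntegrable_mul hK continuousOn_const ha hah) fun s hs => ?_ :)
    simpa using hr _ (hA.2 s (ha.trans hs.1.le))
  calc lyapunovNorm 𝓜 (Φ (a + h))
      ≤ lyapunovNorm 𝓜 (Φ a + (∫ s in a..a + h, A s) * Φ a) +
          (n * C + 1) * ‖Φ (a + h) - (Φ a + (∫ s in a..a + h, A s) * Φ a)‖ :=
        lyapunovNorm_le_add hC hC0 _ _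
    _ ≤ r + (n * C + 1) * ((n * K * h) ^ 2 * B) := by
        rw [← sub_sub]
        gcongr
        exact hΦ.norm_sub_sub_integral_mul_le hA hK ha hh.le hB

lemma IsFundamentalMatrix.lyapunovNorm_step_le_of_union (hC : UniformlyStableWith 𝓜 C) (hC0 : 0 ≤ C)
    {M₂ : Set (Mat n)} {K₁ K₂ ν : ℝ} (hK₁ : ∀ M ∈ 𝓜, ‖M‖ ≤ K₁) (hK₂ : ∀ M ∈ M₂, ‖M‖ ≤ K₂)
    (hν : (n * C + 1) * n * K₂ ≤ ν)
    (hK : ∀ N ∈ 𝓜 ∪ (fun A : Mat n => A - ν • (1 : Mat n)) '' M₂, ‖N‖ ≤ K)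
    (hA : IsSwitchingLaw (𝓜 ∪ (fun A : Mat n => A - ν • (1 : Mat n)) '' M₂) A)
    (hΦ : IsFundamentalMatrix A Φ) {a h B : ℝ} (ha : 0 ≤ a) (hh : 0 < h) (hhν : h * ν ≤ 1)
    (hB : ∀ s ∈ Icc a (a + h), ‖Φ s‖ ≤ B) :
    lyapunovNorm 𝓜 (Φ (a + h)) ≤ lyapunovNorm 𝓜 (Φ a) +
      ((n * C + 1) * n * (n * K₁) ^ 2 * C + (n * C + 1) * (n * K) ^ 2) * B * h ^ 2 := by
  set c := (n * C + 1) * n * (n * K₁) ^ 2 * C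
  have hr : ∀ N ∈ 𝓜 ∪ (fun A : Mat n => A - ν • (1 : Mat n)) '' M₂,
      lyapunovNorm 𝓜 (Φ a + h • (N * Φ a)) ≤ lyapunovNorm 𝓜 (Φ a) + c * h ^ 2 * B := by
    have hΦa : ‖Φ a‖ ≤ B := hB a ⟨le_rfl, by linarith⟩
    have hB0 : 0 ≤ B := (norm_nonneg _).trans hΦa
    rintro N (hN | ⟨M, hM, rfl⟩)
    · exact (lyapunovNorm_add_smul_mul_le_of_mem hC hC0 hK₁ hN hh.le _).trans (by gcongr)
    · exact (lyapunovNorm_add_smul_shift_mul_le hC hC0 (hK₂ M hM) hν hh.le hhν _).trans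
        (le_add_of_nonneg_right (by positivity))
  refine (hΦ.lyapunovNorm_step_le hC hC0 hK hA ha hh hB hr).trans_eq ?_
  ring

end Lyapunov

theorem uniformlyStable_union_shifted_general {n : ℕ}
    (M₁ M₂ : Set (Mat n)) (h₁ : Bornology.IsBounded M₁) (h₂ : Bornology.IsBounded M₂)
    (hstab : UniformlyStable M₁) :
    ∃ ν₀ > (0:ℝ), ∀ ν : ℝ, ν₀ ≤ ν →
      UniformlyStable (M₁ ∪ (fun A : Mat n => A - ν • (1 : Mat n)) '' M₂) := by
  obtain ⟨C, hCpos, hC⟩ : ∃ C > 0, UniformlyStableWith M₁ C := hstab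
  obtain ⟨K₁, hK₁⟩ := h₁.exists_norm_le
  obtain ⟨K₂, hK₂⟩ := h₂.exists_norm_le
  refine ⟨max 1 ((n * C + 1) * n * K₂), lt_max_of_lt_left one_pos, fun ν hν => ?_⟩
  have hν₀ : 0 < ν := (lt_max_of_lt_left one_pos).trans_le hν
  obtain ⟨K, hK⟩ := (h₁.union ((LipschitzWith.id.sub (LipschitzWith.const _)).isBounded_image
    h₂)).exists_norm_le
  have hV1 := norm_le_lyapunovNorm hC hCpos.le 1
  refine ⟨lyapunovNorm M₁ 1 + 1, by linarith [norm_nonneg (1 : Mat n)],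
    fun A Φ hA hΦ t ht => ?_⟩
  obtain ⟨B, hB⟩ := isCompact_Icc.exists_bound_of_continuousOn
    (hΦ.1.mono (Icc_subset_Ici_self : Icc 0 t ⊆ Ici 0))
  have hdecay : lyapunovNorm M₁ (Φ t) ≤ lyapunovNorm M₁ (Φ 0) :=
    le_of_forall_le_add_mul_sq (g := fun s => lyapunovNorm M₁ (Φ s)) ht (one_div_pos.2 hν₀)
      fun s h hs hh hhν hst => hΦ.lyapunovNorm_step_le_of_union hC hCpos.le hK₁ hK₂
        ((le_max_right _ _).trans hν) hK hA hs hh ((le_div_iff₀ hν₀).1 hhν)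
        fun u hu => hB u ⟨hs.trans hu.1, hu.2.trans hst⟩
  calc ‖Φ t‖ ≤ lyapunovNorm M₁ (Φ t) := norm_le_lyapunovNorm hC hCpos.le _
    _ ≤ lyapunovNorm M₁ 1 + 1 := by rw [← hΦ.apply_zero]; linarith

/-- Let `𝓜₁, 𝓜₂` be bounded sets of matrices with `(Σ_𝓜₁)` uniformly
stable. Then, for `ν > 0` large enough, the switched system associated with
`𝓜₁ ∪ { M - ν Id : M ∈ 𝓜₂ }` is uniformly stable. -/
theorem uniformlyStable_union_shifted {n : ℕ} (hn : 1 ≤ n)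
    (M₁ M₂ : Set (Mat n)) (h₁ : Bornology.IsBounded M₁) (h₂ : Bornology.IsBounded M₂)
    (hstab : UniformlyStable M₁) :
    ∃ ν₀ > (0:ℝ), ∀ ν : ℝ, ν₀ ≤ ν →
      UniformlyStable (M₁ ∪ (fun A : Mat n => A - ν • (1 : Mat n)) '' M₂) :=
  uniformlyStable_union_shifted_general M₁ M₂ h₁ h₂ hstab

end
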